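/- arXiv:2301.07912 — 3 statements merged into one kernel-verified Lean document; each statement's English description precedes it below -/
import Mathlib

section
/- Suppose for a function N: ℝ^n → ℝ^p there exist matrices A_lo, A_hi ∈ ℝ^{p×n} and vectors b_lo, b_hi ∈ ℝ^p such that A_lo x + b_lo ≤ N(x) ≤ A_hi x + b_hi for all x in an interval [x_lo, x_hi] ⊆ ℝ^n. Define G_lo(x, x̂) = [A_lo]^+ x + [A_lo]^- x̂ + b_lo and G_hi(x, x̂) = [A_hi]^+ x̂ + [A_hi]^- x + b_hi. Then for every η ≤ η̂ with η, η̂ ∈ [x_lo, x_hi] and every z ∈ [η, η̂], it holds that G_lo(η, η̂) ≤ N(z) ≤ G_hi(η, η̂); i.e., (G_lo, G_hi) is an inclusion function for N on [x_lo, x_hi]. -/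
open Matrix

/-- Entrywise nonnegative part of a matrix. -/
noncomputable def mpos {p n : ℕ} (A : Matrix (Fin p) (Fin n) ℝ) : Matrix (Fin p) (Fin n) ℝ :=
  fun i j => max (A i j) 0

/-- Entrywise nonpositive part of a matrix. -/
noncomputable def mneg {p n : ℕ} (A : Matrix (Fin p) (Fin n) ℝ) : Matrix (Fin p) (Fin n) ℝ :=
  fun i j => min (A i j) 0

/-- Metzler part of a square matrix. -/
noncomputable def mzl {n : ℕ} (A : Matrix (Fin n) (Fin n) ℝ) : Matrix (Fin n) (Fin n) ℝ :=
  fun i j => if 0 ≤ A i j ∨ i = j then A i j else 0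

/-- Non-Metzler part of a square matrix. -/
noncomputable def nmzl {n : ℕ} (A : Matrix (Fin n) (Fin n) ℝ) : Matrix (Fin n) (Fin n) ℝ :=
  A - mzl A

theorem inclusion_from_linear_bounds {n p : ℕ}
    (N : (Fin n → ℝ) → (Fin p → ℝ))
    (Alo Ahi : Matrix (Fin p) (Fin n) ℝ) (blo bhi : Fin p → ℝ)
    (xlo xhi : Fin n → ℝ)
    (hbound : ∀ x : Fin n → ℝ, xlo ≤ x → x ≤ xhi →
      Alo.mulVec x + blo ≤ N x ∧ N x ≤ Ahi.mulVec x + bhi)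
    (η η' : Fin n → ℝ) (hηη' : η ≤ η')
    (hη : xlo ≤ η) (hη'2 : η' ≤ xhi)
    (z : Fin n → ℝ) (hz1 : η ≤ z) (hz2 : z ≤ η') :
    (mpos Alo).mulVec η + (mneg Alo).mulVec η' + blo ≤ N z ∧
      N z ≤ (mpos Ahi).mulVec η' + (mneg Ahi).mulVec η + bhi := by
  have hzlo : xlo ≤ z := le_trans hη hz1
  have hzhi : z ≤ xhi := le_trans hz2 hη'2
  obtain ⟨h1, h2⟩ := hbound z hzlo hzhi
  constructor
  · refine le_trans ?_ h1
    intro i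
    simp only [Pi.add_apply, mulVec, dotProduct, mpos, mneg]
    have key : ∑ j, max (Alo i j) 0 * η j + ∑ j, min (Alo i j) 0 * η' j
        ≤ ∑ j, Alo i j * z j := by
      rw [← Finset.sum_add_distrib]
      apply Finset.sum_le_sum
      intro j _
      have h3 : max (Alo i j) 0 * η j ≤ max (Alo i j) 0 * z j :=
        mul_le_mul_of_nonneg_left (hz1 j) (le_max_right _ _)
      have h4 : min (Alo i j) 0 * η' j ≤ min (Alo i j) 0 * z j :=
        mul_le_mul_of_nonpos_left (hz2 j) (min_le_right _ _)
      calc max (Alo i j) 0 * η j + min (Alo i j) 0 * η' j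
          ≤ max (Alo i j) 0 * z j + min (Alo i j) 0 * z j := add_le_add h3 h4
        _ = Alo i j * z j := by rw [← add_mul, max_add_min, add_zero]
    linarith
  · refine le_trans h2 ?_
    intro i
    simp only [Pi.add_apply, mulVec, dotProduct, mpos, mneg]
    have key : ∑ j, Ahi i j * z j
        ≤ ∑ j, max (Ahi i j) 0 * η' j + ∑ j, min (Ahi i j) 0 * η j := by
      rw [← Finset.sum_add_distrib]
      apply Finset.sum_le_sum
      intro j _
      have h3 : max (Ahi i j) 0 * z j ≤ max (Ahi i j) 0 * η' j :=
        mul_le_mul_of_nonneg_left (hz2 j) (le_max_right _ _)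
      have h4 : min (Ahi i j) 0 * z j ≤ min (Ahi i j) 0 * η j :=
        mul_le_mul_of_nonpos_left (hz1 j) (min_le_right _ _)
      calc Ahi i j * z j = max (Ahi i j) 0 * z j + min (Ahi i j) 0 * z j := by
            rw [← add_mul, max_add_min, add_zero]
        _ ≤ max (Ahi i j) 0 * η' j + min (Ahi i j) 0 * η j := add_le_add h3 h4
    linarith
end

section
/- For any square matrices M, L ∈ ℝ^{n×n} and any vectors x ≤ x̂ in ℝ^n, the componentwise inequality (⌈M⌉^Mzl + ⌈L⌉^Mzl) x + (⌊M⌋^Mzl + ⌊L⌋^Mzl) x̂ ≤ ⌈M + L⌉^Mzl x + ⌊M + L⌋^Mzl x̂ holds. -/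
open Matrix

/-!
With `D := ⌈M⌉ + ⌈L⌉ - ⌈M + L⌉` (Metzler parts), the non-Metzler parts satisfy
`⌊M⌋ + ⌊L⌋ = ⌊M + L⌋ - D`, so the left-hand side equals the right-hand side minus `D (x̂ - x)`.
Off the diagonal the Metzler part is `max · 0`, which is subadditive, hence `D ≥ 0` entrywise,
and `D (x̂ - x) ≥ 0`.
-/

lemma mulVec_nonneg_of_nonneg {m n R : Type*} [Fintype n] [Semiring R] [PartialOrder R]
    [IsOrderedRing R] {D : Matrix m n R} (hD : ∀ i j, 0 ≤ D i j) {v : n → R} (hv : 0 ≤ v) :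
    0 ≤ D *ᵥ v :=
  fun i => dotProduct_nonneg_of_nonneg (fun j => hD i j) hv

lemma mzl_apply_of_ne {n : ℕ} (A : Matrix (Fin n) (Fin n) ℝ) {i j : Fin n} (hij : i ≠ j) :
    mzl A i j = max (A i j) 0 := by
  by_cases h : 0 ≤ A i j
  · simp [mzl, h]
  · simp [mzl, h, hij, (not_le.1 h).le]

lemma mzl_add_apply_le {n : ℕ} (M L : Matrix (Fin n) (Fin n) ℝ) (i j : Fin n) :
    mzl (M + L) i j ≤ mzl M i j + mzl L i j := by
  rcases eq_or_ne i j with rfl | hij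
  · simp [mzl]
  · simpa only [mzl_apply_of_ne _ hij, Matrix.add_apply, add_zero] using
      max_add_add_le_max_add_max (a := M i j) (b := L i j) (c := 0) (d := 0)

theorem metzler_superadditive {n : ℕ} (M L : Matrix (Fin n) (Fin n) ℝ)
    (x x' : Fin n → ℝ) (hxx' : x ≤ x') :
    (mzl M + mzl L).mulVec x + (nmzl M + nmzl L).mulVec x' ≤
      (mzl (M + L)).mulVec x + (nmzl (M + L)).mulVec x' := by
  set D := mzl M + mzl L - mzl (M + L)
  have hD : ∀ i j, 0 ≤ D i j := fun i j => sub_nonneg.2 (mzl_add_apply_le M L i j)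
  have hsplit : (mzl M + mzl L).mulVec x + (nmzl M + nmzl L).mulVec x' =
      (mzl (M + L)).mulVec x + (nmzl (M + L)).mulVec x' - D *ᵥ (x' - x) := by
    simp only [D, nmzl, add_mulVec, sub_mulVec, mulVec_sub]
    abel
  rw [hsplit]
  exact sub_le_self _ (mulVec_nonneg_of_nonneg hD (sub_nonneg.2 hxx'))
end

section
/- Define the tight decomposition function of f on the top triangle by d_i(x, x̂, u, û) = min over z ∈ [x, x̂] with z_i = x_i and η ∈ [u, û] of f_i(z, η), for x ≤ x̂ and u ≤ û (assuming f is continuous so the minimum exists). Then any decomposition function F of f satisfies F_i(x, x̂, u, û) ≤ d_i(x, x̂, u, û) for all x ≤ x̂, u ≤ û, and all i; that is, the tight decomposition function is the largest decomposition function on the top triangle. -/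
open Matrix

theorem tight_decomposition_is_largest {n m : ℕ}
    (f : (Fin n → ℝ) → (Fin m → ℝ) → (Fin n → ℝ))
    (hcont : Continuous (fun p : (Fin n → ℝ) × (Fin m → ℝ) => f p.1 p.2))
    (F : (Fin n → ℝ) → (Fin n → ℝ) → (Fin m → ℝ) → (Fin m → ℝ) → (Fin n → ℝ))
    (hdiag : ∀ (x : Fin n → ℝ) (u : Fin m → ℝ), F x x u u = f x u)
    (hmonox : ∀ (x x' y y' : Fin n → ℝ) (u u' : Fin m → ℝ) (i : Fin n),
      x ≤ y → x i = y i → y' ≤ x' → F x x' u u' i ≤ F y y' u u' i)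
    (hmonou : ∀ (x x' : Fin n → ℝ) (u u' v v' : Fin m → ℝ) (i : Fin n),
      u ≤ v → v' ≤ u' → F x x' u u' i ≤ F x x' v v' i)
    (x x' : Fin n → ℝ) (u u' : Fin m → ℝ)
    (hxx' : x ≤ x') (huu' : u ≤ u') (i : Fin n) :
    F x x' u u' i ≤
      sInf {r : ℝ | ∃ (z : Fin n → ℝ) (η : Fin m → ℝ),
        x ≤ z ∧ z ≤ x' ∧ z i = x i ∧ u ≤ η ∧ η ≤ u' ∧ r = f z η i} := by
  apply le_csInf
  · exact ⟨_, x, u, le_refl x, hxx', rfl, le_refl u, huu', rfl⟩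
  · rintro r ⟨z, η, hxz, hzx', hzi, huη, hηu', rfl⟩
    calc F x x' u u' i ≤ F z z u u' i := hmonox x x' z z u u' i hxz hzi.symm hzx'
      _ ≤ F z z η η i := hmonou z z u u' η η i huη hηu'
      _ = f z η i := by rw [hdiag]
end
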